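/- arXiv:1901.04891 — 2 statements merged into one kernel-verified Lean document; each statement's English description precedes it below -/
import Mathlib

section
/- Let f : ℕ → ℝ be a sequence with f(t) ≥ 0 for all t, and suppose there exist constants c > 0 and B ≥ 0 such that |f(t+1) − f(t)| ≤ c for all t ≥ 0 and (1/T)·∑_{t=0}^{T−1} f(t) ≤ B for all integers T ≥ 1. Then lim_{T→∞} f(T)/T = 0. -/
open Filter Finset

theorem strong_stability_implies_mean_rate_stability (f : ℕ → ℝ)
    (hf_nonneg : ∀ t, 0 ≤ f t) (c B : ℝ) (hc : 0 < c) (hB : 0 ≤ B)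
    (hinc : ∀ t, |f (t + 1) - f t| ≤ c)
    (havg : ∀ T : ℕ, 1 ≤ T → (1 / (T : ℝ)) * ∑ t ∈ Finset.range T, f t ≤ B) :
    Filter.Tendsto (fun T : ℕ => f T / T) Filter.atTop (nhds 0) := by
  -- Step decrease bound
  have hstep : ∀ T j : ℕ, j ≤ T → f T - c * j ≤ f (T - j) := by
    intro T j
    induction j with
    | zero => simp
    | succ j ih =>
      intro hj
      have hj' : j ≤ T := le_of_lt (Nat.lt_of_succ_le hj)
      have h1 : f T - c * j ≤ f (T - j) := ih hj'
      have heq : (T - (j + 1)) + 1 = T - j := by omega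
      have h2 := abs_le.mp (hinc (T - (j + 1)))
      rw [heq] at h2
      push_cast
      linarith [h2.1, h2.2]
  -- Main pointwise bound
  have hbound : ∀ T : ℕ, 1 ≤ T →
      f T ≤ B * (T + 1) / (Nat.sqrt T + 1) + c * Nat.sqrt T := by
    intro T hT
    set k := Nat.sqrt T with hk
    have hkT : k ≤ T := Nat.sqrt_le_self T
    have hsum : ∑ t ∈ range (T + 1), f t ≤ B * (T + 1) := by
      have h := havg (T + 1) (by omega)
      have hpos : (0:ℝ) < ((T + 1 : ℕ) : ℝ) := by positivity
      rw [one_div, inv_mul_le_iff₀ hpos] at h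
      push_cast at h ⊢
      linarith
    have h1 : ∑ j ∈ range (k + 1), f (T - j) ≤ ∑ t ∈ range (T + 1), f t := by
      rw [← Finset.sum_range_reflect (fun j => f j) (T + 1)]
      simp only [Nat.add_sub_cancel]
      exact Finset.sum_le_sum_of_subset_of_nonneg
        (Finset.range_subset_range.mpr (by omega)) (fun i _ _ => hf_nonneg _)
    have h2 : ((k : ℝ) + 1) * (f T - c * k) ≤ ∑ j ∈ range (k + 1), f (T - j) := by
      calc ((k : ℝ) + 1) * (f T - c * k)
          = ∑ _j ∈ range (k + 1), (f T - c * k) := by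
            rw [Finset.sum_const, Finset.card_range]; push_cast; ring
        _ ≤ ∑ j ∈ range (k + 1), f (T - j) := by
            apply Finset.sum_le_sum
            intro j hj
            have hjk : j ≤ k := Nat.lt_succ_iff.mp (Finset.mem_range.mp hj)
            have hs := hstep T j (le_trans hjk hkT)
            have hcj : c * (j : ℝ) ≤ c * k := by
              apply mul_le_mul_of_nonneg_left _ hc.le
              exact_mod_cast hjk
            linarith
    have hk1 : (0:ℝ) < (k : ℝ) + 1 := by positivity
    have hmain : ((k : ℝ) + 1) * (f T - c * k) ≤ B * (T + 1) :=
      le_trans h2 (le_trans h1 hsum)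
    have hdiv : f T - c * k ≤ B * (T + 1) / ((k : ℝ) + 1) := by
      rw [le_div_iff₀ hk1]
      nlinarith
    linarith
  -- Squeeze
  have hsqrt_tendsto : Tendsto (fun T : ℕ => Nat.sqrt T) atTop atTop := by
    apply tendsto_atTop_atTop.mpr
    intro n
    refine ⟨n * n, fun m hm => ?_⟩
    have hn : Nat.sqrt (n * n) = n := by simpa [sq] using Nat.sqrt_eq' n
    calc n = Nat.sqrt (n * n) := hn.symm
      _ ≤ Nat.sqrt m := Nat.sqrt_le_sqrt hm
  have hg : Tendsto (fun m : ℕ => 2 * B / ((m : ℝ) + 1) + c / m) atTop (nhds 0) := by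
    have h1 : Tendsto (fun m : ℕ => 2 * B / ((m : ℝ) + 1)) atTop (nhds 0) := by
      have := (tendsto_const_div_atTop_nhds_zero_nat (2 * B)).comp
        (tendsto_add_atTop_nat 1)
      simpa [Function.comp_def] using this
    have h2 : Tendsto (fun m : ℕ => c / (m : ℝ)) atTop (nhds 0) :=
      tendsto_const_div_atTop_nhds_zero_nat c
    simpa using h1.add h2
  have hG : Tendsto (fun T : ℕ => 2 * B / ((Nat.sqrt T : ℝ) + 1) + c / (Nat.sqrt T : ℝ))
      atTop (nhds 0) := hg.comp hsqrt_tendsto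
  apply squeeze_zero' (g := fun T : ℕ =>
    2 * B / ((Nat.sqrt T : ℝ) + 1) + c / (Nat.sqrt T : ℝ))
  · filter_upwards [eventually_ge_atTop 1] with T _
    exact div_nonneg (hf_nonneg T) (Nat.cast_nonneg T)
  · filter_upwards [eventually_ge_atTop 1] with T hT
    set k := Nat.sqrt T with hk
    have hTpos : (0:ℝ) < T := by exact_mod_cast hT
    have hk1 : 1 ≤ k := Nat.one_le_iff_ne_zero.mpr (by
      simp [hk, Nat.sqrt_eq_zero]; omega)
    have hkpos : (0:ℝ) < k := by exact_mod_cast hk1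
    have hk1pos : (0:ℝ) < (k : ℝ) + 1 := by positivity
    have hkk : (k : ℝ) * k ≤ T := by
      have := Nat.sqrt_le' T
      have h' : k * k ≤ T := by simpa [pow_two] using this
      exact_mod_cast h'
    have hb := hbound T hT
    -- f T / T ≤ (B(T+1)/(k+1) + c k)/T ≤ 2B/(k+1) + c/k
    have e1 : B * (T + 1) / ((k : ℝ) + 1) / T ≤ 2 * B / ((k : ℝ) + 1) := by
      rw [div_le_div_iff₀ (by positivity) hk1pos, div_mul_eq_mul_div,
        div_le_iff₀ hk1pos]
      have hT1' : (1:ℝ) ≤ T := by exact_mod_cast hT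
      have hT1 : B * ((T:ℝ) + 1) ≤ 2 * B * T := by
        nlinarith [mul_nonneg hB (sub_nonneg.mpr hT1')]
      nlinarith [mul_le_mul_of_nonneg_right hT1 hk1pos.le]
    have e2 : c * (k : ℝ) / T ≤ c / (k : ℝ) := by
      rw [div_le_div_iff₀ hTpos hkpos]
      nlinarith
    have : f T / T ≤ (B * (T + 1) / ((k : ℝ) + 1) + c * k) / T := by
      gcongr
    calc f T / T ≤ (B * (T + 1) / ((k : ℝ) + 1) + c * k) / T := this
      _ = B * (T + 1) / ((k : ℝ) + 1) / T + c * (k : ℝ) / T := by ring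
      _ ≤ 2 * B / ((k : ℝ) + 1) + c / (k : ℝ) := add_le_add e1 e2
  · exact hG
end

section
/- Let (Ω, 𝔽, P) be a probability space, let s ≥ 1 be an integer, and let X_1, …, X_s be independent random variables, each taking values in [0,1] almost surely and each with expectation μ. Then for every integer T ≥ s + 1, P( ∃ n ∈ {s, s+1, …, T−1} such that (1/s)·∑_{k=1}^s X_k − μ > √(3·log n / (2s)) ) ≤ 3/(2s²). -/
/-!
The confidence radius `√(3 log n / (2s))` increases with `n`, so the bad event for any round
`n ≥ s` is contained in the one for `n = s` and no union bound over rounds is needed. Hoeffding's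
inequality bounds that event by `exp (-2s · 3 log s / (2s)) = s⁻³ ≤ 3 / (2s²)`.
-/

open MeasureTheory ProbabilityTheory

theorem measureReal_sum_sub_ge_le_of_mem_Icc {Ω ι : Type*} [MeasurableSpace Ω]
    {P : Measure Ω} [IsProbabilityMeasure P] {X : ι → Ω → ℝ} {a b : ℝ} {s : Finset ι}
    (hindep : iIndepFun X P) (hmeas : ∀ i, AEMeasurable (X i) P)
    (hrange : ∀ i, ∀ᵐ ω ∂P, X i ω ∈ Set.Icc a b) {ε : ℝ} (hε : 0 ≤ ε) :
    P.real {ω | ε ≤ ∑ i ∈ s, (X i ω - P[X i])} ≤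
      Real.exp (-2 * ε ^ 2 / (s.card * (b - a) ^ 2)) := by
  have hcentered : iIndepFun (fun i ω ↦ X i ω - P[X i]) P :=
    (hindep.comp (fun i (x : ℝ) ↦ x - P[X i]) fun _ ↦ measurable_sub_const _ :)
  refine (HasSubgaussianMGF.measure_sum_ge_le_of_iIndepFun hcentered
    (fun i _ ↦ hasSubgaussianMGF_of_mem_Icc (hmeas i) (hrange i)) hε).trans_eq ?_
  congr 1
  have hc : (((‖b - a‖₊ / 2) ^ 2 : NNReal) : ℝ) = (b - a) ^ 2 / 4 := by
    norm_num [div_pow]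
  rw [Finset.sum_const, nsmul_eq_mul, NNReal.coe_mul, NNReal.coe_natCast, hc,
    show 2 * (s.card * ((b - a) ^ 2 / 4)) = s.card * (b - a) ^ 2 / 2 by ring, div_div_eq_mul_div]
  ring

theorem measureReal_mean_sub_ge_le_of_mem_Icc {Ω ι : Type*} [MeasurableSpace Ω] [Fintype ι]
    {P : Measure Ω} [IsProbabilityMeasure P] {X : ι → Ω → ℝ} {a b μ : ℝ}
    (hindep : iIndepFun X P) (hmeas : ∀ i, AEMeasurable (X i) P)
    (hrange : ∀ i, ∀ᵐ ω ∂P, X i ω ∈ Set.Icc a b) (hmean : ∀ i, P[X i] = μ) {r : ℝ} (hr : 0 ≤ r) :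
    P.real {ω | r ≤ (1 / (Fintype.card ι : ℝ)) * ∑ i, X i ω - μ} ≤
      Real.exp (-2 * Fintype.card ι * r ^ 2 / (b - a) ^ 2) := by
  rcases isEmpty_or_nonempty ι with hι | hι
  · simp [measureReal_le_one]
  have hcard : (0 : ℝ) < Fintype.card ι := by exact_mod_cast Fintype.card_pos
  have hevent : {ω | r ≤ (1 / (Fintype.card ι : ℝ)) * ∑ i, X i ω - μ} =
      {ω | Fintype.card ι * r ≤ ∑ i, (X i ω - P[X i])} := by
    ext ω
    simp only [Set.mem_ofPred_eq, hmean, Finset.sum_sub_distrib, Finset.sum_const,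
      Finset.card_univ, nsmul_eq_mul]
    rw [one_div_mul_eq_div, div_sub' hcard.ne', le_div_iff₀ hcard, mul_comm r]
  rw [hevent]
  refine (measureReal_sum_sub_ge_le_of_mem_Icc hindep hmeas hrange (by positivity)).trans_eq ?_
  rw [Finset.card_univ]
  field_simp

theorem bad_event_F_bound {Ω : Type*} [MeasurableSpace Ω]
    (P : Measure Ω) [IsProbabilityMeasure P]
    (s : ℕ) (hs : 1 ≤ s) (X : Fin s → Ω → ℝ) (μ : ℝ)
    (hmeas : ∀ k, Measurable (X k))
    (hindep : iIndepFun X P)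
    (hrange : ∀ k, ∀ᵐ ω ∂P, X k ω ∈ Set.Icc (0 : ℝ) 1)
    (hmean : ∀ k, P[X k] = μ) :
    ∀ T : ℕ, s + 1 ≤ T →
      P {ω | ∃ n ∈ Finset.Icc s (T - 1),
          (1 / (s : ℝ)) * ∑ k, X k ω - μ > Real.sqrt (3 * Real.log n / (2 * s))}
        ≤ ENNReal.ofReal (3 / (2 * (s : ℝ) ^ 2)) := by
  intro T _
  have hs₁ : (1 : ℝ) ≤ s := by exact_mod_cast hs
  set r := Real.sqrt (3 * Real.log s / (2 * s))
  have hsub : {ω | ∃ n ∈ Finset.Icc s (T - 1),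
      (1 / (s : ℝ)) * ∑ k, X k ω - μ > Real.sqrt (3 * Real.log n / (2 * s))} ⊆
      {ω | r ≤ (1 / (Fintype.card (Fin s) : ℝ)) * ∑ k, X k ω - μ} := by
    rintro ω ⟨n, hn, hgt⟩
    rw [Set.mem_ofPred_eq, Fintype.card_fin]
    refine le_trans (Real.sqrt_le_sqrt ?_) hgt.le
    gcongr
    exact_mod_cast (Finset.mem_Icc.1 hn).1
  have hexp : Real.exp (-2 * Fintype.card (Fin s) * r ^ 2 / (1 - 0) ^ 2) ≤
      3 / (2 * (s : ℝ) ^ 2) := by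
    have hr : 2 * (s : ℝ) * r ^ 2 = Real.log ((s : ℝ) ^ 3) := by
      rw [Real.sq_sqrt (by positivity), Real.log_pow]
      field_simp
      push_cast
      ring
    rw [Fintype.card_fin, show -2 * (s : ℝ) * r ^ 2 / (1 - 0) ^ 2 = -(2 * s * r ^ 2) by ring, hr,
      Real.exp_neg, Real.exp_log (by positivity), inv_eq_one_div,
      div_le_div_iff₀ (by positivity) (by positivity)]
    nlinarith [mul_le_mul_of_nonneg_left hs₁ (sq_nonneg (s : ℝ))]
  calc _ ≤ P {ω | r ≤ (1 / (Fintype.card (Fin s) : ℝ)) * ∑ k, X k ω - μ} := measure_mono hsub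
    _ = ENNReal.ofReal (P.real _) := (ofReal_measureReal (measure_ne_top _ _)).symm
    _ ≤ _ := ENNReal.ofReal_le_ofReal <| (measureReal_mean_sub_ge_le_of_mem_Icc hindep
      (fun k ↦ (hmeas k).aemeasurable) hrange hmean (Real.sqrt_nonneg _)).trans hexp
end
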